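/- Let A_1, …, A_M be D×D Hermitian complex matrices, let ψ₀ ∈ ℂ^D be a unit vector, define U(θ) = exp(iθ_M A_M) ⋯ exp(iθ_1 A_1), ψ(θ) = U(θ)ψ₀, and ρ_θ = ψ(θ)ψ(θ)† (the rank-one density matrix). Let K be a D×D matrix, F = K†K, and suppose p(θ) = Tr(F ρ_θ) > 0 on a neighborhood of θ; define ψ^{ps}(θ) = K ψ(θ)/√(p(θ)). Then the pure-state QFIM of ψ^{ps} satisfies 𝓘_{ij}(θ | ψ^{ps}) = 4 Re[ Tr(F Ã_j ρ_θ Ã_i)/p(θ) − Tr(F ρ_θ Ã_i) Tr(F Ã_j ρ_θ)/p(θ)² ], where Ã_j = Ã_j(θ) is the conjugated generator [exp(iθ_M A_M) ⋯ exp(iθ_{j+1} A_{j+1})] A_j [exp(iθ_{j+1} A_{j+1}) ⋯ exp(iθ_M A_M)]† (with Ã_M = A_M). -/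

import Mathlib

noncomputable section

open Matrix

/-- Standard Hermitian inner product on `ℂ^D`, conjugate-linear in the first argument. -/
def dotc {D : ℕ} (x y : Fin D → ℂ) : ℂ := ∑ d, starRingEnd ℂ (x d) * y d

/-- Partial derivative of a parametrized family with respect to the `i`-th parameter. -/
def pder {M D : ℕ} (i : Fin M) (φ : (Fin M → ℝ) → (Fin D → ℂ)) (θ : Fin M → ℝ) :
    Fin D → ℂ :=
  fderiv ℝ φ θ (Pi.single i 1)

/-- Pure-state quantum Fisher information matrix entry
`𝓘_{ij}(θ|φ) = 4 Re[⟨∂_iφ,∂_jφ⟩ − ⟨∂_iφ,φ⟩⟨φ,∂_jφ⟩]`. -/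
def qfim {M D : ℕ} (φ : (Fin M → ℝ) → (Fin D → ℂ)) (θ : Fin M → ℝ) (i j : Fin M) : ℝ :=
  4 * (dotc (pder i φ θ) (pder j φ θ) -
        dotc (pder i φ θ) (φ θ) * dotc (φ θ) (pder j φ θ)).re

/-- `Ufam A θ = exp(iθ_M A_M) ⋯ exp(iθ_1 A_1)`. -/
def Ufam {M D : ℕ} (A : Fin M → Matrix (Fin D) (Fin D) ℂ) (θ : Fin M → ℝ) :
    Matrix (Fin D) (Fin D) ℂ :=
  ((List.ofFn fun m : Fin M =>
      NormedSpace.exp (((θ m : ℂ) * Complex.I) • A m)).reverse).prod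

/-- The product of the exponential factors with index strictly greater than `j`. -/
def Vfam {M D : ℕ} (A : Fin M → Matrix (Fin D) (Fin D) ℂ) (θ : Fin M → ℝ) (j : Fin M) :
    Matrix (Fin D) (Fin D) ℂ :=
  (((List.ofFn fun m : Fin M =>
      NormedSpace.exp (((θ m : ℂ) * Complex.I) • A m)).reverse).take (M - 1 - (j : ℕ))).prod

/-- The conjugated generator `Ã_j(θ)` (so `Ã_M = A_M` for the last index). -/
def Atil {M D : ℕ} (A : Fin M → Matrix (Fin D) (Fin D) ℂ) (θ : Fin M → ℝ) (j : Fin M) :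
    Matrix (Fin D) (Fin D) ℂ :=
  Vfam A θ j * A j * (Vfam A θ j)ᴴ

/-!
The postselected state is `φ = v / ‖v‖` with `v = K ψ` and `‖v‖² = p`. Differentiating the real
normalizing factor only adds multiples of `v` to `∂ᵢφ`, and these drop out of the pure-state QFIM
kernel, which therefore equals `⟨∂ᵢv, ∂ⱼv⟩ / p − ⟨∂ᵢv, v⟩⟨v, ∂ⱼv⟩ / p²`. Only the `j`-th factor of
`U(θ)` depends on `θ_j`, and pulling its generator through the unitary factors to its left gives
`∂ⱼU = i Ãⱼ U`, hence `∂ⱼv = i K Ãⱼ ψ`. The phase `i` cancels, and each inner product is one of the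
traces of the statement, because `ρ = ψ ψ†` and `F = K† K`.
-/

section InnerProduct

variable {D : ℕ}

lemma dotc_eq_star_dotProduct (x y : Fin D → ℂ) : dotc x y = star x ⬝ᵥ y := rfl

lemma dotc_add_left (x y z : Fin D → ℂ) : dotc (x + y) z = dotc x z + dotc y z := by
  simp only [dotc_eq_star_dotProduct, star_add, add_dotProduct]

lemma dotc_add_right (x y z : Fin D → ℂ) : dotc x (y + z) = dotc x y + dotc x z :=
  dotProduct_add _ _ _

lemma dotc_smul_left (a : ℂ) (x y : Fin D → ℂ) :
    dotc (a • x) y = starRingEnd ℂ a * dotc x y := by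
  simp only [dotc_eq_star_dotProduct, star_smul, smul_dotProduct, smul_eq_mul]; rfl

lemma dotc_smul_right (a : ℂ) (x y : Fin D → ℂ) : dotc x (a • y) = a * dotc x y :=
  dotProduct_smul _ _ _

lemma dotc_real_smul_left (r : ℝ) (x y : Fin D → ℂ) : dotc (r • x) y = r * dotc x y := by
  rw [← Complex.coe_smul, dotc_smul_left, Complex.conj_ofReal]

lemma dotc_real_smul_right (r : ℝ) (x y : Fin D → ℂ) : dotc x (r • y) = r * dotc x y := by
  rw [← Complex.coe_smul, dotc_smul_right]

lemma dotc_self_eq_ofReal_re (x : Fin D → ℂ) : dotc x x = ((dotc x x).re : ℂ) :=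
  (Complex.conj_eq_iff_re.mp (by simp [dotc, mul_comm])).symm

lemma dotc_smul_smul_of_norm_eq_one {c : ℂ} (hc : ‖c‖ = 1) (x y : Fin D → ℂ) :
    dotc (c • x) (c • y) = dotc x y := by
  rw [dotc_smul_left, dotc_smul_right, ← mul_assoc, Complex.conj_mul', hc, Complex.ofReal_one,
    one_pow, one_mul]

lemma dotc_smul_mul_dotc_smul_of_norm_eq_one {c : ℂ} (hc : ‖c‖ = 1) (x y z : Fin D → ℂ) :
    dotc (c • x) z * dotc z (c • y) = dotc x z * dotc z y := by
  rw [dotc_smul_left, dotc_smul_right, mul_mul_mul_comm, Complex.conj_mul', hc,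
    Complex.ofReal_one, one_pow, one_mul]

lemma dotc_mulVec_left (N : Matrix (Fin D) (Fin D) ℂ) (x y : Fin D → ℂ) :
    dotc (N *ᵥ x) y = dotc x (Nᴴ *ᵥ y) := by
  rw [dotc_eq_star_dotProduct, dotc_eq_star_dotProduct, star_mulVec, dotProduct_mulVec]

lemma trace_mul_vecMulVec_mul (X Y : Matrix (Fin D) (Fin D) ℂ) (a : Fin D → ℂ) :
    (X * vecMulVec a (star a) * Y).trace = dotc (Yᴴ *ᵥ a) (X *ᵥ a) := by
  rw [mul_vecMulVec, vecMulVec_mul, trace_vecMulVec, dotProduct_comm, dotc_eq_star_dotProduct,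
    star_mulVec, conjTranspose_conjTranspose]

lemma trace_mul_vecMulVec_mul_eq_dotc (K X Y : Matrix (Fin D) (Fin D) ℂ) (a : Fin D → ℂ) :
    (Kᴴ * K * X * vecMulVec a (star a) * Y).trace =
      dotc (K *ᵥ (Yᴴ *ᵥ a)) (K *ᵥ (X *ᵥ a)) := by
  rw [trace_mul_vecMulVec_mul, Matrix.mul_assoc, ← mulVec_mulVec, ← mulVec_mulVec,
    ← dotc_mulVec_left]

/-- The left side is the pure-state QFIM kernel of `c • v`, whose derivatives are `r • v + c • a`
and `s • v + c • b` by the Leibniz rule. -/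
lemma dotc_sub_dotc_mul_dotc_of_rescale (v a b : Fin D → ℂ) {c : ℝ}
    (hc : c ^ 2 * (dotc v v).re = 1) (r s : ℝ) :
    dotc (r • v + c • a) (s • v + c • b) -
        dotc (r • v + c • a) (c • v) * dotc (c • v) (s • v + c • b) =
      dotc a b / dotc v v - dotc a v * dotc v b / dotc v v ^ 2 := by
  have hp : dotc v v = ((dotc v v).re : ℂ) := dotc_self_eq_ofReal_re v
  set p := (dotc v v).re
  have hp0 : (p : ℂ) ≠ 0 := by
    intro h
    norm_num [Complex.ofReal_eq_zero.mp h] at hc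
  have hc' : (c : ℂ) ^ 2 * p = 1 := by exact_mod_cast hc
  simp only [dotc_add_left, dotc_add_right, dotc_real_smul_left, dotc_real_smul_right, hp]
  field_simp
  linear_combination ((p : ℂ) * dotc a b - ((c : ℂ) ^ 2 * p + 1) * dotc a v * dotc v b -
    (p : ℂ) ^ 2 * c * (s * dotc a v + r * dotc v b) - (p : ℂ) ^ 3 * s * r) * hc'

end InnerProduct

section Normalization

variable {M D : ℕ}

lemma pder_real_smul {c : (Fin M → ℝ) → ℝ} {v : (Fin M → ℝ) → Fin D → ℂ} {θ : Fin M → ℝ}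
    (hc : DifferentiableAt ℝ c θ) (hv : DifferentiableAt ℝ v θ) (k : Fin M) :
    pder k (fun θ' => c θ' • v θ') θ = fderiv ℝ c θ (Pi.single k 1) • v θ + c θ • pder k v θ := by
  rw [pder, fderiv_fun_smul hc hv, add_comm]
  rfl

theorem qfim_inv_sqrt_smul {v : (Fin M → ℝ) → Fin D → ℂ} {θ : Fin M → ℝ}
    (hv : DifferentiableAt ℝ v θ) (hpos : 0 < (dotc (v θ) (v θ)).re) (i j : Fin M) :
    qfim (fun θ' => (√(dotc (v θ') (v θ')).re)⁻¹ • v θ') θ i j =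
      4 * (dotc (pder i v θ) (pder j v θ) / dotc (v θ) (v θ) -
        dotc (pder i v θ) (v θ) * dotc (v θ) (pder j v θ) / dotc (v θ) (v θ) ^ 2).re := by
  set c : (Fin M → ℝ) → ℝ := fun θ' => (√(dotc (v θ') (v θ')).re)⁻¹
  have hc : DifferentiableAt ℝ c θ := by
    have hp : DifferentiableAt ℝ (fun θ' => (dotc (v θ') (v θ')).re) θ := by
      unfold dotc; fun_prop
    exact (hp.sqrt hpos.ne').inv (Real.sqrt_pos.mpr hpos).ne'
  have hc2 : c θ ^ 2 * (dotc (v θ) (v θ)).re = 1 := by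
    simp only [c, inv_pow, Real.sq_sqrt hpos.le, inv_mul_cancel₀ hpos.ne']
  rw [qfim, pder_real_smul hc hv, pder_real_smul hc hv, dotc_sub_dotc_mul_dotc_of_rescale _ _ _ hc2]

end Normalization

section Factorization

variable {M D : ℕ}

def expFactor (A : Fin M → Matrix (Fin D) (Fin D) ℂ) (θ : Fin M → ℝ) (m : Fin M) :
    Matrix (Fin D) (Fin D) ℂ :=
  NormedSpace.exp (((θ m : ℂ) * Complex.I) • A m)

/-- The factors of `Ufam A θ` with index below `j`, so that
`Ufam A θ = Vfam A θ j * exp(iθ_j A_j) * Wfam A θ j` (see `Ufam_update`). -/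
def Wfam (A : Fin M → Matrix (Fin D) (Fin D) ℂ) (θ : Fin M → ℝ) (j : Fin M) :
    Matrix (Fin D) (Fin D) ℂ :=
  ((((List.finRange M).reverse).drop (M - j)).map (expFactor A θ)).prod

lemma Ufam_eq_prod_map (A : Fin M → Matrix (Fin D) (Fin D) ℂ) (θ : Fin M → ℝ) :
    Ufam A θ = (((List.finRange M).reverse).map (expFactor A θ)).prod := by
  rw [Ufam, List.ofFn_eq_map, List.map_reverse]; rfl

lemma Vfam_eq_prod_map (A : Fin M → Matrix (Fin D) (Fin D) ℂ) (θ : Fin M → ℝ) (j : Fin M) :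
    Vfam A θ j = ((((List.finRange M).reverse).take (M - 1 - j)).map (expFactor A θ)).prod := by
  rw [Vfam, List.ofFn_eq_map, List.map_take, List.map_reverse]; rfl

lemma finRange_reverse_eq_take_append_cons_drop (j : Fin M) :
    (List.finRange M).reverse =
      (List.finRange M).reverse.take (M - 1 - j) ++
        j :: (List.finRange M).reverse.drop (M - j) := by
  have hk : M - 1 - j < (List.finRange M).reverse.length := by
    simp only [List.length_reverse, List.length_finRange]; omega
  have hget : (List.finRange M).reverse[M - 1 - j] = j := by
    ext
    simp only [List.getElem_reverse, List.length_finRange, List.getElem_finRange, Fin.cast_mk]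
    omega
  have hdrop := List.drop_eq_getElem_cons hk
  rw [hget] at hdrop
  rw [show M - (j : ℕ) = M - 1 - j + 1 by omega, ← hdrop, List.take_append_drop]

lemma notMem_take_and_notMem_drop_finRange_reverse (j : Fin M) :
    j ∉ (List.finRange M).reverse.take (M - 1 - j) ∧
      j ∉ (List.finRange M).reverse.drop (M - j) := by
  have h : (List.finRange M).reverse.Nodup := List.nodup_reverse.mpr (List.nodup_finRange M)
  rw [finRange_reverse_eq_take_append_cons_drop j, List.nodup_append, List.nodup_cons] at h
  exact ⟨fun hj => h.2.2 j hj j List.mem_cons_self rfl, h.2.1.1⟩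

lemma Ufam_update (A : Fin M → Matrix (Fin D) (Fin D) ℂ) (θ : Fin M → ℝ) (j : Fin M) (s : ℝ) :
    Ufam A (Function.update θ j s) =
      Vfam A θ j * NormedSpace.exp (((s : ℂ) * Complex.I) • A j) * Wfam A θ j := by
  obtain ⟨hV, hW⟩ := notMem_take_and_notMem_drop_finRange_reverse j
  have hfac : ∀ m, m ≠ j → expFactor A (Function.update θ j s) m = expFactor A θ m := by
    intro m hm; simp [expFactor, Function.update_of_ne hm]
  rw [Ufam_eq_prod_map, finRange_reverse_eq_take_append_cons_drop j, List.map_append,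
    List.prod_append, List.map_cons, List.prod_cons, Vfam_eq_prod_map, Wfam, ← mul_assoc,
    List.map_congr_left fun m hm => hfac m (ne_of_mem_of_not_mem hm hV),
    List.map_congr_left fun m hm => hfac m (ne_of_mem_of_not_mem hm hW)]
  simp [expFactor]

lemma exp_ofReal_mul_I_smul_mem_unitaryGroup {B : Matrix (Fin D) (Fin D) ℂ} (hB : Bᴴ = B)
    (t : ℝ) :
    NormedSpace.exp (((t : ℂ) * Complex.I) • B) ∈ unitaryGroup (Fin D) ℂ := by
  have hstar : (((t : ℂ) * Complex.I) • B)ᴴ = -(((t : ℂ) * Complex.I) • B) := by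
    simp [conjTranspose_smul, hB, Complex.conj_ofReal]
  rw [mem_unitaryGroup_iff', star_eq_conjTranspose, ← exp_conjTranspose, hstar,
    ← exp_add_of_commute _ _ (Commute.refl (((t : ℂ) * Complex.I) • B)).neg_left, neg_add_cancel,
    NormedSpace.exp_zero]

lemma Vfam_mem_unitaryGroup {A : Fin M → Matrix (Fin D) (Fin D) ℂ} (hA : ∀ m, (A m)ᴴ = A m)
    (θ : Fin M → ℝ) (j : Fin M) : Vfam A θ j ∈ unitaryGroup (Fin D) ℂ := by
  rw [Vfam_eq_prod_map]
  exact Submonoid.list_prod_mem _ fun _ hU =>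
    let ⟨m, _, hm⟩ := List.mem_map.mp hU
    hm ▸ exp_ofReal_mul_I_smul_mem_unitaryGroup (hA m) (θ m)

lemma Atil_conjTranspose {A : Fin M → Matrix (Fin D) (Fin D) ℂ} (hA : ∀ m, (A m)ᴴ = A m)
    (θ : Fin M → ℝ) (j : Fin M) : (Atil A θ j)ᴴ = Atil A θ j := by
  simp [Atil, conjTranspose_mul, hA, Matrix.mul_assoc]

end Factorization

section Calculus

attribute [local instance] Matrix.linftyOpNormedAddCommGroup Matrix.linftyOpNormedSpace
  Matrix.linftyOpNormedRing Matrix.linftyOpNormedAlgebra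

variable {M D : ℕ}

lemma ofReal_mul_I_smul (t : ℝ) (B : Matrix (Fin D) (Fin D) ℂ) :
    ((t : ℂ) * Complex.I) • B = t • (Complex.I • B) := by
  rw [← smul_assoc, Complex.real_smul]

lemma differentiable_Ufam (A : Fin M → Matrix (Fin D) (Fin D) ℂ) :
    Differentiable ℝ (Ufam A) := by
  intro θ
  have hfac : ∀ m, DifferentiableAt ℝ (fun θ' => expFactor A θ' m) θ := fun m => by
    simp only [expFactor, ofReal_mul_I_smul]
    exact (differentiableAt_exp_smul_const (Complex.I • A m) (θ m)).comp
      (f := fun θ' : Fin M → ℝ => θ' m) θ (differentiableAt_apply m θ)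
  rw [funext (Ufam_eq_prod_map A)]
  exact (HasFDerivAt.list_prod' fun m _ => (hfac m).hasFDerivAt).differentiableAt

lemma hasDerivAt_Ufam_update {A : Fin M → Matrix (Fin D) (Fin D) ℂ} (hA : ∀ m, (A m)ᴴ = A m)
    (θ : Fin M → ℝ) (j : Fin M) :
    HasDerivAt (fun s : ℝ => Ufam A (Function.update θ j s))
      (Complex.I • (Atil A θ j * Ufam A θ)) (θ j) := by
  have hexp := hasDerivAt_exp_smul_const' (𝕂 := ℝ) (Complex.I • A j) (θ j)
  simp only [← ofReal_mul_I_smul] at hexp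
  have hU := Ufam_update A θ j (θ j)
  rw [Function.update_eq_self] at hU
  have hVV : (Vfam A θ j)ᴴ * Vfam A θ j = 1 :=
    mem_unitaryGroup_iff'.mp (Vfam_mem_unitaryGroup hA θ j)
  -- `i A_j` is moved to the far left through the unitary `Vfam`, where it becomes `i Ãⱼ`.
  have hderiv : Vfam A θ j * (Complex.I • A j * NormedSpace.exp (((θ j : ℂ) * Complex.I) • A j)) *
      Wfam A θ j = Complex.I • (Atil A θ j * Ufam A θ) := by
    rw [hU, Atil]
    simp only [Matrix.mul_smul, Matrix.smul_mul, Matrix.mul_assoc]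
    rw [← Matrix.mul_assoc (Vfam A θ j)ᴴ, hVV, Matrix.one_mul]
  simp_rw [Ufam_update]
  exact ((hexp.const_mul (Vfam A θ j)).mul_const (Wfam A θ j)).congr_deriv hderiv

lemma pder_eq_of_hasDerivAt_update {φ : (Fin M → ℝ) → Fin D → ℂ} {θ : Fin M → ℝ} {j : Fin M}
    {w : Fin D → ℂ} (hφ : DifferentiableAt ℝ φ θ)
    (h : HasDerivAt (fun s => φ (Function.update θ j s)) w (θ j)) : pder j φ θ = w :=
  (hφ.hasFDerivAt.comp_hasDerivAt_of_eq (θ j) (hasDerivAt_update θ j (θ j))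
    (Function.update_eq_self j θ).symm).unique h

def mulVecMulVecCLM (N : Matrix (Fin D) (Fin D) ℂ) (x : Fin D → ℂ) :
    Matrix (Fin D) (Fin D) ℂ →L[ℝ] Fin D → ℂ :=
  LinearMap.toContinuousLinearMap
    { toFun := fun X => N *ᵥ (X *ᵥ x)
      map_add' := fun X Y => by simp only [add_mulVec, mulVec_add]
      map_smul' := fun r X => by simp only [smul_mulVec, mulVec_smul, RingHom.id_apply] }

lemma differentiable_mulVec_Ufam_mulVec (A : Fin M → Matrix (Fin D) (Fin D) ℂ)
    (N : Matrix (Fin D) (Fin D) ℂ) (x : Fin D → ℂ) :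
    Differentiable ℝ fun θ => N *ᵥ (Ufam A θ *ᵥ x) :=
  (mulVecMulVecCLM N x).differentiable.comp (differentiable_Ufam A)

lemma pder_mulVec_Ufam_mulVec {A : Fin M → Matrix (Fin D) (Fin D) ℂ} (hA : ∀ m, (A m)ᴴ = A m)
    (N : Matrix (Fin D) (Fin D) ℂ) (x : Fin D → ℂ) (θ : Fin M → ℝ) (j : Fin M) :
    pder j (fun θ' => N *ᵥ (Ufam A θ' *ᵥ x)) θ =
      Complex.I • N *ᵥ (Atil A θ j *ᵥ (Ufam A θ *ᵥ x)) := by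
  refine pder_eq_of_hasDerivAt_update (differentiable_mulVec_Ufam_mulVec A N x θ) ?_
  refine ((mulVecMulVecCLM N x).hasFDerivAt.comp_hasDerivAt (θ j)
    (hasDerivAt_Ufam_update hA θ j)).congr_deriv ?_
  change N *ᵥ ((Complex.I • (Atil A θ j * Ufam A θ)) *ᵥ x) = _
  simp only [smul_mulVec, mulVec_smul, ← mulVec_mulVec]

end Calculus

theorem psqfim_trace_formula_general
    (M D : ℕ) (A : Fin M → Matrix (Fin D) (Fin D) ℂ)
    (hA : ∀ m, (A m)ᴴ = A m)
    (ψ₀ : Fin D → ℂ)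
    (ψ : (Fin M → ℝ) → (Fin D → ℂ))
    (hψ : ∀ θ, ψ θ = (Ufam A θ).mulVec ψ₀)
    (ρ : (Fin M → ℝ) → Matrix (Fin D) (Fin D) ℂ)
    (hρ : ∀ θ, ρ θ = vecMulVec (ψ θ) (star (ψ θ)))
    (K : Matrix (Fin D) (Fin D) ℂ) (F : Matrix (Fin D) (Fin D) ℂ)
    (hF : F = Kᴴ * K)
    (p : (Fin M → ℝ) → ℝ)
    (hp : ∀ θ, p θ = ((F * ρ θ).trace).re)
    (θ : Fin M → ℝ)
    (hppos : ∀ᶠ θ' in nhds θ, 0 < p θ')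
    (ψps : (Fin M → ℝ) → (Fin D → ℂ))
    (hψps : ∀ θ', ψps θ' = (Real.sqrt (p θ'))⁻¹ • K.mulVec (ψ θ')) :
    ∀ i j, qfim ψps θ i j =
      4 * ((F * Atil A θ j * ρ θ * Atil A θ i).trace / (p θ : ℂ) -
            (F * ρ θ * Atil A θ i).trace * (F * Atil A θ j * ρ θ).trace /
              (p θ : ℂ) ^ 2).re := by
  intro i j
  obtain rfl : ψ = fun θ' => Ufam A θ' *ᵥ ψ₀ := funext hψ
  obtain rfl : ρ = fun θ' => vecMulVec (Ufam A θ' *ᵥ ψ₀) (star (Ufam A θ' *ᵥ ψ₀)) := funext hρ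
  subst hF
  beta_reduce at hψps hp ⊢
  set v : (Fin M → ℝ) → Fin D → ℂ := fun θ' => K *ᵥ (Ufam A θ' *ᵥ ψ₀)
  have hpv (θ' : Fin M → ℝ) : p θ' = (dotc (v θ') (v θ')).re := by
    simpa only [hp, conjTranspose_one, one_mulVec, mul_one] using
      congrArg Complex.re (trace_mul_vecMulVec_mul_eq_dotc K 1 1 (Ufam A θ' *ᵥ ψ₀))
  have hv : ψps = fun θ' => (√(dotc (v θ') (v θ')).re)⁻¹ • v θ' := by
    funext θ'; rw [hψps, hpv]
  have hvpos : 0 < (dotc (v θ) (v θ)).re := hpv θ ▸ hppos.self_of_nhds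
  have htrace (X Y : Matrix (Fin D) (Fin D) ℂ) :=
    trace_mul_vecMulVec_mul_eq_dotc K X Y (Ufam A θ *ᵥ ψ₀)
  have htrace_right := htrace 1 (Atil A θ i)
  have htrace_left := htrace (Atil A θ j) 1
  simp only [Atil_conjTranspose hA, conjTranspose_one, one_mulVec, mul_one]
    at htrace_right htrace_left
  rw [hv, qfim_inv_sqrt_smul (differentiable_mulVec_Ufam_mulVec A K ψ₀ θ) hvpos,
    pder_mulVec_Ufam_mulVec hA, pder_mulVec_Ufam_mulVec hA,
    dotc_smul_smul_of_norm_eq_one Complex.norm_I,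
    dotc_smul_mul_dotc_smul_of_norm_eq_one Complex.norm_I, htrace, Atil_conjTranspose hA,
    htrace_right, htrace_left, hpv, ← dotc_self_eq_ofReal_re]

/-- **Eq. (8) of the paper** in trace form: the QFIM of the postselected family
`ψ^{ps} = Kψ/√p` satisfies
`𝓘_{ij}(θ|ψ^{ps}) = 4 Re[Tr(F Ã_j ρ_θ Ã_i)/p − Tr(F ρ_θ Ã_i) Tr(F Ã_j ρ_θ)/p²]`. -/
theorem psqfim_trace_formula
    (M D : ℕ) (A : Fin M → Matrix (Fin D) (Fin D) ℂ)
    (hA : ∀ m, (A m)ᴴ = A m)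
    (ψ₀ : Fin D → ℂ) (hψ₀ : dotc ψ₀ ψ₀ = 1)
    (ψ : (Fin M → ℝ) → (Fin D → ℂ))
    (hψ : ∀ θ, ψ θ = (Ufam A θ).mulVec ψ₀)
    (ρ : (Fin M → ℝ) → Matrix (Fin D) (Fin D) ℂ)
    (hρ : ∀ θ, ρ θ = vecMulVec (ψ θ) (star (ψ θ)))
    (K : Matrix (Fin D) (Fin D) ℂ) (F : Matrix (Fin D) (Fin D) ℂ)
    (hF : F = Kᴴ * K)
    (p : (Fin M → ℝ) → ℝ)
    (hp : ∀ θ, p θ = ((F * ρ θ).trace).re)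
    (θ : Fin M → ℝ)
    (hppos : ∀ᶠ θ' in nhds θ, 0 < p θ')
    (ψps : (Fin M → ℝ) → (Fin D → ℂ))
    (hψps : ∀ θ', ψps θ' = (Real.sqrt (p θ'))⁻¹ • K.mulVec (ψ θ')) :
    ∀ i j, qfim ψps θ i j =
      4 * ((F * Atil A θ j * ρ θ * Atil A θ i).trace / (p θ : ℂ) -
            (F * ρ θ * Atil A θ i).trace * (F * Atil A θ j * ρ θ).trace /
              (p θ : ℂ) ^ 2).re :=
  psqfim_trace_formula_general M D A hA ψ₀ ψ hψ ρ hρ K F hF p hp θ hppos ψps hψps
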